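/- Define W(s,t) = (-s - t + t·cosh s + s·cosh t + sinh s + sinh t - sinh(s+t)) / (s·t·sinh(s/2)·sinh(t/2)·sinh((s+t)/2)), for s, t ≠ 0 with s + t ≠ 0. Then W(s,t) → -2/3 as (s,t) → (0,0). -/

import Mathlib

/-!
Write `cosh x - 1 = x² P x`, `sinh x - x = x³ Q x` and `sinh x = x R x` with the integral Taylor
remainders `P`, `Q`, `R`: continuous even functions with `P 0 = 1/2`, `Q 0 = 1/6`, `R 0 = 1`.
The numerator of `W s t` is `(cosh s - 1)(t - sinh t) + (cosh t - 1)(s - sinh s)`, whence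
`W s t = -8 (t P s Q t + s P t Q s) / ((s + t) R (s/2) R (t/2) R ((s+t)/2))`.
Split `t P s Q t + s P t Q s = (s + t)(P s Q t + P t Q s)/2 + (t - s)(P s Q t - P t Q s)/2`.
The symmetric part gives the limit `-4 · 2 · (1/2)(1/6) = -2/3`. For the antisymmetric part,
evenness gives `f t - f s = O(|t + s| |t - s|)` for `f = P, Q`
(as `cosh a - cosh b = 2 sinh ((a+b)/2) sinh ((a-b)/2)`), so after division by `s + t` it is
`O((t - s)²)`.
-/

open Real Filter Topology

noncomputable def W (s t : ℝ) : ℝ :=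
  (-s - t + t * Real.cosh s + s * Real.cosh t + Real.sinh s + Real.sinh t -
      Real.sinh (s + t)) /
    (s * t * Real.sinh (s / 2) * Real.sinh (t / 2) * Real.sinh ((s + t) / 2))

open intervalIntegral

/-- The integral Taylor remainders of `sinh` and `cosh` at `0` all have this form. -/
noncomputable def coshMoment (w : ℝ → ℝ) (x : ℝ) : ℝ :=
  ∫ u in (0 : ℝ)..1, w u * cosh (x * u)

theorem continuous_coshMoment {w : ℝ → ℝ} (hw : Continuous w) :
    Continuous (coshMoment w) := by
  unfold coshMoment
  fun_prop

theorem coshMoment_zero (w : ℝ → ℝ) : coshMoment w 0 = ∫ u in (0 : ℝ)..1, w u := by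
  simp [coshMoment]

theorem coshMoment_eq_sub_of_hasDerivAt {w F : ℝ → ℝ} {x : ℝ} (hw : Continuous w)
    (hF : ∀ u, HasDerivAt F (w u * cosh (x * u)) u) : coshMoment w x = F 1 - F 0 :=
  integral_eq_sub_of_hasDerivAt (fun u _ => hF u) (by apply Continuous.intervalIntegrable; fun_prop)

theorem sinh_eq_mul_coshMoment (x : ℝ) : sinh x = x * coshMoment (fun _ => 1) x := by
  rcases eq_or_ne x 0 with rfl | hx
  · simp
  rw [coshMoment_eq_sub_of_hasDerivAt (F := fun v => sinh (x * v) / x) continuous_const]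
  · field_simp
    simp
  · intro u
    refine ((((hasDerivAt_id' u).const_mul x).sinh).div_const x).congr_deriv ?_
    field_simp

theorem cosh_sub_one_eq_mul_coshMoment (x : ℝ) :
    cosh x - 1 = x ^ 2 * coshMoment (fun u => 1 - u) x := by
  rcases eq_or_ne x 0 with rfl | hx
  · simp
  rw [coshMoment_eq_sub_of_hasDerivAt
    (F := fun v => (1 - v) * sinh (x * v) / x + cosh (x * v) / x ^ 2) (by fun_prop)]
  · field_simp
    simp
  · intro u
    have hlin := (hasDerivAt_id' u).const_sub 1
    have hmul := (hasDerivAt_id' u).const_mul x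
    refine (((hlin.mul hmul.sinh).div_const x).add (hmul.cosh.div_const (x ^ 2))).congr_deriv ?_
    field_simp
    ring

theorem sinh_sub_self_eq_mul_coshMoment (x : ℝ) :
    sinh x - x = x ^ 3 * coshMoment (fun u => (1 - u) ^ 2 / 2) x := by
  rcases eq_or_ne x 0 with rfl | hx
  · simp
  rw [coshMoment_eq_sub_of_hasDerivAt (F := fun v => (1 - v) ^ 2 / 2 * sinh (x * v) / x
      + (1 - v) * cosh (x * v) / x ^ 2 + sinh (x * v) / x ^ 3) (by fun_prop)]
  · field_simp
    simp
    ring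
  · intro u
    have hlin := (hasDerivAt_id' u).const_sub 1
    have hmul := (hasDerivAt_id' u).const_mul x
    refine (((((hlin.pow 2).div_const 2).mul hmul.sinh).div_const x).add
      ((hlin.mul hmul.cosh).div_const (x ^ 2))).add (hmul.sinh.div_const (x ^ 3)) |>.congr_deriv ?_
    simp only [Pi.pow_apply]
    field_simp
    ring

theorem abs_sinh_le_two_mul_abs {x : ℝ} (hx : |x| ≤ 1) : |sinh x| ≤ 2 * |x| := by
  have h₁ := abs_exp_sub_one_le hx
  have h₂ := abs_exp_sub_one_le (x := -x) (by rwa [abs_neg])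
  rw [abs_neg] at h₂
  rw [sinh_eq, show (exp x - exp (-x)) / 2 = ((exp x - 1) - (exp (-x) - 1)) / 2 by ring,
    abs_div, abs_two]
  linarith [abs_sub (exp x - 1) (exp (-x) - 1)]

theorem abs_cosh_sub_cosh_le {a b : ℝ} (ha : |a| ≤ 1) (hb : |b| ≤ 1) :
    |cosh a - cosh b| ≤ 2 * |a + b| * |a - b| := by
  have hsum : |(a + b) / 2| ≤ 1 := by
    rw [abs_div, abs_two]
    linarith [abs_add_le a b]
  have hdiff : |(a - b) / 2| ≤ 1 := by
    rw [abs_div, abs_two]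
    linarith [abs_sub a b]
  have hprod : cosh a - cosh b = 2 * sinh ((a + b) / 2) * sinh ((a - b) / 2) := by
    calc cosh a - cosh b
        = cosh ((a + b) / 2 + (a - b) / 2) - cosh ((a + b) / 2 - (a - b) / 2) := by ring_nf
      _ = 2 * sinh ((a + b) / 2) * sinh ((a - b) / 2) := by rw [cosh_add, cosh_sub]; ring
  calc |cosh a - cosh b| = 2 * |sinh ((a + b) / 2)| * |sinh ((a - b) / 2)| := by
        rw [hprod, abs_mul, abs_mul, abs_two]
    _ ≤ 2 * (2 * |(a + b) / 2|) * (2 * |(a - b) / 2|) := by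
        gcongr
        exacts [abs_sinh_le_two_mul_abs hsum, abs_sinh_le_two_mul_abs hdiff]
    _ = 2 * |a + b| * |a - b| := by
        rw [abs_div, abs_div, abs_two]
        ring

theorem exists_abs_coshMoment_sub_le {w : ℝ → ℝ} (hw : Continuous w) :
    ∃ C, ∀ s t, |s| ≤ 1 → |t| ≤ 1 →
      |coshMoment w t - coshMoment w s| ≤ C * |t + s| * |t - s| := by
  obtain ⟨K, hK⟩ := isCompact_Icc.exists_bound_of_continuousOn
    (hw.continuousOn (s := Set.Icc (0 : ℝ) 1))
  refine ⟨2 * K, fun s t hs ht => ?_⟩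
  have hint : ∀ x, IntervalIntegrable (fun u => w u * cosh (x * u)) MeasureTheory.volume 0 1 :=
    fun x => by apply Continuous.intervalIntegrable; fun_prop
  have hpt : ∀ u ∈ Set.uIoc (0 : ℝ) 1,
      ‖w u * cosh (t * u) - w u * cosh (s * u)‖ ≤ 2 * K * |t + s| * |t - s| := by
    intro u hu
    rw [Set.uIoc_of_le zero_le_one] at hu
    have hu1 : |u| ≤ 1 := abs_le.2 ⟨by linarith [hu.1], hu.2⟩
    have hwu : |w u| ≤ K := hK u (Set.Ioc_subset_Icc_self hu)
    have hcosh := abs_cosh_sub_cosh_le (a := t * u) (b := s * u)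
      (by rw [abs_mul]; nlinarith [abs_nonneg t, abs_nonneg u])
      (by rw [abs_mul]; nlinarith [abs_nonneg s, abs_nonneg u])
    rw [← add_mul, ← sub_mul, abs_mul, abs_mul] at hcosh
    rw [← mul_sub, norm_mul, Real.norm_eq_abs]
    calc |w u| * |cosh (t * u) - cosh (s * u)|
        ≤ K * (2 * (|t + s| * |u|) * (|t - s| * |u|)) := by gcongr; exact (abs_nonneg _).trans hwu
      _ = 2 * K * |t + s| * |t - s| * (|u| * |u|) := by ring
      _ ≤ 2 * K * |t + s| * |t - s| := by
        refine mul_le_of_le_one_right ?_ (by nlinarith [abs_nonneg u])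
        have := (abs_nonneg _).trans hwu
        positivity
  simpa [coshMoment, ← integral_sub (hint t) (hint s)]
    using norm_integral_le_of_norm_le_const hpt

theorem tendsto_div_add_mul_sub_of_abs_sub_le {f : ℝ → ℝ} {C : ℝ}
    (hf : ∀ s t, |s| ≤ 1 → |t| ≤ 1 → |f t - f s| ≤ C * |t + s| * |t - s|) :
    Tendsto (fun p : ℝ × ℝ => (p.2 - p.1) / (p.1 + p.2) * (f p.2 - f p.1))
      (𝓝 0) (𝓝 0) := by
  have hbox : ∀ᶠ p : ℝ × ℝ in 𝓝 0, |p.1| ≤ 1 ∧ |p.2| ≤ 1 := by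
    filter_upwards [Metric.closedBall_mem_nhds (0 : ℝ × ℝ) one_pos] with p hp
    rw [mem_closedBall_zero_iff] at hp
    exact ⟨(norm_fst_le p).trans hp, (norm_snd_le p).trans hp⟩
  have hbound : ∀ᶠ p : ℝ × ℝ in 𝓝 0,
      ‖(p.2 - p.1) / (p.1 + p.2) * (f p.2 - f p.1)‖ ≤ |C| * (p.2 - p.1) ^ 2 := by
    filter_upwards [hbox] with ⟨s, t⟩ ⟨hs, ht⟩
    -- at `s + t = 0` the quotient is `0` by the convention `x / 0 = 0`
    rcases eq_or_ne (s + t) 0 with hst | hst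
    · simp only [hst, div_zero, zero_mul, norm_zero]
      positivity
    calc ‖(t - s) / (s + t) * (f t - f s)‖ = |t - s| / |s + t| * |f t - f s| := by
          rw [Real.norm_eq_abs, abs_mul, abs_div]
      _ ≤ |t - s| / |s + t| * (|C| * |t + s| * |t - s|) := by
          gcongr
          exact (hf s t hs ht).trans (by gcongr; exact le_abs_self C)
      _ = |C| * (t - s) ^ 2 := by
          rw [add_comm t s]
          field_simp [abs_ne_zero.2 hst]
          rw [sq_abs]
  refine squeeze_zero_norm' hbound ?_
  simpa using ((by fun_prop : Continuous fun p : ℝ × ℝ => |C| * (p.2 - p.1) ^ 2).tendsto 0)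

local notation "P" => coshMoment (fun u => 1 - u)
local notation "Q" => coshMoment (fun u => (1 - u) ^ 2 / 2)
local notation "R" => coshMoment (fun _ => 1)

theorem W_eq_coshMoment {s t : ℝ} (hs : s ≠ 0) (ht : t ≠ 0) (hst : s + t ≠ 0) :
    W s t = -4 * (P s * Q t + P t * Q s + P s * ((t - s) / (s + t) * (Q t - Q s))
      - Q s * ((t - s) / (s + t) * (P t - P s))) / (R (s / 2) * R (t / 2) * R ((s + t) / 2)) := by
  have hR : ∀ x ≠ 0, R (x / 2) ≠ 0 := fun x hx hRx => by
    have := sinh_eq_mul_coshMoment (x / 2)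
    rw [hRx, mul_zero, sinh_eq_zero] at this
    exact hx (by linarith)
  have hnum : -s - t + t * cosh s + s * cosh t + sinh s + sinh t - sinh (s + t)
      = -(s ^ 2 * t ^ 2) * (t * P s * Q t + s * P t * Q s) := by
    rw [sinh_add]
    linear_combination (t - sinh t) * cosh_sub_one_eq_mul_coshMoment s
      - s ^ 2 * P s * sinh_sub_self_eq_mul_coshMoment t
      + (s - sinh s) * cosh_sub_one_eq_mul_coshMoment t
      - t ^ 2 * P t * sinh_sub_self_eq_mul_coshMoment s
  rw [W, hnum, sinh_eq_mul_coshMoment (s / 2), sinh_eq_mul_coshMoment (t / 2),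
    sinh_eq_mul_coshMoment ((s + t) / 2)]
  have := hR s hs
  have := hR t ht
  have := hR _ hst
  field_simp
  ring

theorem coshMoment_one_sub_zero : P 0 = 1 / 2 := by
  rw [coshMoment_zero, integral_comp_sub_left (fun x => x)]
  norm_num

theorem coshMoment_one_sub_sq_zero : Q 0 = 1 / 6 := by
  rw [coshMoment_zero, integral_div, integral_comp_sub_left (fun x => x ^ 2)]
  norm_num

theorem tendsto_symmetric_part :
    Tendsto (fun p : ℝ × ℝ => P p.1 * Q p.2 + P p.2 * Q p.1) (𝓝 0) (𝓝 (1 / 6)) := by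
  have hP : Continuous P := continuous_coshMoment (by fun_prop)
  have hQ : Continuous Q := continuous_coshMoment (by fun_prop)
  convert (by fun_prop : Continuous fun p : ℝ × ℝ => P p.1 * Q p.2 + P p.2 * Q p.1).tendsto 0
  simp only [Prod.fst_zero, Prod.snd_zero, coshMoment_one_sub_zero, coshMoment_one_sub_sq_zero]
  norm_num

theorem tendsto_denominator :
    Tendsto (fun p : ℝ × ℝ => R (p.1 / 2) * R (p.2 / 2) * R ((p.1 + p.2) / 2)) (𝓝 0) (𝓝 1) := by
  have hR : Continuous R := continuous_coshMoment continuous_const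
  convert (by fun_prop : Continuous fun p : ℝ × ℝ =>
    R (p.1 / 2) * R (p.2 / 2) * R ((p.1 + p.2) / 2)).tendsto 0
  simp [coshMoment_zero]

theorem W_limit :
    Tendsto (fun p : ℝ × ℝ => W p.1 p.2)
      (𝓝[{p : ℝ × ℝ | p.1 ≠ 0 ∧ p.2 ≠ 0 ∧ p.1 + p.2 ≠ 0}] (0, 0))
      (𝓝 (-2 / 3)) := by
  have hP := (continuous_coshMoment (w := fun u => 1 - u) (by fun_prop)).tendsto' 0 _
    coshMoment_one_sub_zero |>.comp (continuous_fst.tendsto (0 : ℝ × ℝ))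
  have hQ := (continuous_coshMoment (w := fun u => (1 - u) ^ 2 / 2) (by fun_prop)).tendsto' 0 _
    coshMoment_one_sub_sq_zero |>.comp (continuous_fst.tendsto (0 : ℝ × ℝ))
  obtain ⟨CP, hCP⟩ := exists_abs_coshMoment_sub_le (w := fun u => 1 - u) (by fun_prop)
  obtain ⟨CQ, hCQ⟩ := exists_abs_coshMoment_sub_le (w := fun u => (1 - u) ^ 2 / 2) (by fun_prop)
  have hlim := (((tendsto_symmetric_part.add
    (hP.mul (tendsto_div_add_mul_sub_of_abs_sub_le hCQ))).sub
    (hQ.mul (tendsto_div_add_mul_sub_of_abs_sub_le hCP))).const_mul (-4)).div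
    tendsto_denominator one_ne_zero
  rw [show (-2 / 3 : ℝ) = -4 * (1 / 6 + 1 / 2 * 0 - 1 / 6 * 0) / 1 by norm_num]
  refine (hlim.mono_left nhdsWithin_le_nhds).congr' ?_
  filter_upwards [self_mem_nhdsWithin] with p ⟨hs, ht, hst⟩ using (W_eq_coshMoment hs ht hst).symm
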